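/- Let h ∈ H², i.e., h ∈ L²(𝕋) with c_n{h} = 0 for all n < 0, and suppose the set {hP : P a polynomial} is dense in H², i.e., for every g ∈ H², inf over polynomials P of ‖g − hP‖_{L²(𝕋)} = 0. Then for every L ≥ 1, the infimum over polynomials P of ‖(t^{−L} − P(t)) h(t)‖²_{L²(𝕋)} equals ∑_{n=0}^{L−1} |c_n{h}|². -/

import Mathlib

open MeasureTheory

/-- The `n`-th Fourier coefficient of a function on the unit circle:
`c_n{f} = (1/2π) ∫₀^{2π} f(e^{iθ}) e^{−inθ} dθ`. -/
noncomputable def fourierCoef (f : ℂ → ℂ) (n : ℤ) : ℂ :=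
  (1 / (2 * Real.pi) : ℂ) * ∫ θ in (0:ℝ)..(2 * Real.pi),
    f (Complex.exp (θ * Complex.I)) * Complex.exp (-(n : ℂ) * θ * Complex.I)

/-- `f ∈ L²(𝕋)`. -/
def MemL2Circle (f : ℂ → ℂ) : Prop :=
  MeasureTheory.MemLp (fun θ : ℝ => f (Complex.exp (θ * Complex.I))) 2
    (MeasureTheory.volume.restrict (Set.Ioc 0 (2 * Real.pi)))

/-- `f ∈ H²`: `f ∈ L²(𝕋)` with vanishing negative Fourier coefficients. -/
def MemH2 (f : ℂ → ℂ) : Prop :=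
  MemL2Circle f ∧ ∀ n : ℤ, n < 0 → fourierCoef f n = 0

/-- The squared `L²(𝕋)` norm: `‖f‖² = (1/2π) ∫₀^{2π} |f(e^{iθ})|² dθ`. -/
noncomputable def l2NormSqCircle (f : ℂ → ℂ) : ℝ :=
  (1 / (2 * Real.pi)) * ∫ θ in (0:ℝ)..(2 * Real.pi),
    ‖f (Complex.exp (θ * Complex.I))‖ ^ 2

/-!
Put `g = t^{-L} (h - ∑_{n<L} c_n{h} t^n)`. Its coefficients are those of `h` shifted down by `L`
with the first `L` removed, so `g ∈ H²`, and for every polynomial `P`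
`(t^{-L} - P) h = ∑_{n<L} c_n{h} t^{n-L} + (g - hP)`.
The first summand has only negative frequencies while `g - hP ∈ H²`, so the two are orthogonal and
`‖(t^{-L} - P) h‖² = ∑_{n<L} |c_n{h}|² + ‖g - hP‖²`; density of `{hP}` makes the last term
arbitrarily small.
-/

open Complex
open scoped Real ComplexConjugate

section SquareIntegrable

variable {α : Type*} [MeasurableSpace α] {μ : Measure α}

theorem integral_mul_conj_self (F : α → ℂ) :
    ∫ x, F x * conj (F x) ∂μ = ↑(∫ x, ‖F x‖ ^ 2 ∂μ) := by
  simp_rw [mul_conj']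
  exact_mod_cast integral_ofReal (𝕜 := ℂ)

theorem integral_norm_add_sq {F G : α → ℂ} (hF : MemLp F 2 μ) (hG : MemLp G 2 μ) :
    ∫ x, ‖F x + G x‖ ^ 2 ∂μ =
      ∫ x, ‖F x‖ ^ 2 ∂μ + ∫ x, ‖G x‖ ^ 2 ∂μ + 2 * (∫ x, F x * conj (G x) ∂μ).re := by
  have hFG : Integrable (fun x => F x * conj (G x)) μ := hF.integrable_mul hG.star
  have hF2 : Integrable (fun x => ‖F x‖ ^ 2) μ := hF.integrable_norm_pow two_ne_zero
  have hG2 : Integrable (fun x => ‖G x‖ ^ 2) μ := hG.integrable_norm_pow two_ne_zero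
  have hpt : ∀ x, ‖F x + G x‖ ^ 2 = ‖F x‖ ^ 2 + ‖G x‖ ^ 2 + 2 * (F x * conj (G x)).re := by
    intro x
    simp only [← normSq_eq_norm_sq]
    exact normSq_add _ _
  simp_rw [hpt]
  have hre : Integrable (fun x => 2 * (F x * conj (G x)).re) μ := hFG.re.const_mul 2
  rw [integral_add (by exact hF2.add hG2) hre, integral_add hF2 hG2, integral_const_mul]
  congr 2
  exact integral_re hFG

end SquareIntegrable

theorem norm_exp_mul_I_zpow (θ : ℝ) (k : ℤ) : ‖exp (θ * I) ^ k‖ = 1 := by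
  rw [norm_zpow, norm_exp_ofReal_mul_I, one_zpow]

theorem conj_exp_mul_I_zpow (θ : ℝ) (k : ℤ) : conj (exp (θ * I) ^ k) = exp (θ * I) ^ (-k) := by
  rw [map_zpow₀, ← exp_conj, ← exp_int_mul, ← exp_int_mul]
  simp

theorem continuous_exp_mul_I_zpow (k : ℤ) : Continuous fun θ : ℝ => exp (θ * I) ^ k :=
  (by fun_prop : Continuous fun θ : ℝ => exp (θ * I)).zpow₀ k fun _ => Or.inl (exp_ne_zero _)

theorem setIntegral_exp_mul_I_zpow (k : ℤ) :
    ∫ θ in Set.Ioc 0 (2 * π), exp (θ * I) ^ k = if k = 0 then (2 * π : ℂ) else 0 := by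
  rw [← intervalIntegral.integral_of_le (by positivity)]
  split_ifs with hk
  · simp [hk]
  have hkI : (k : ℂ) * I ≠ 0 := by simp [hk]
  simp_rw [← exp_int_mul, ← mul_assoc, mul_right_comm _ _ I]
  rw [integral_exp_mul_complex hkI, ofReal_zero, mul_zero, exp_zero,
    show (k : ℂ) * I * ↑(2 * π) = k * (2 * π * I) by push_cast; ring, exp_int_mul_two_pi_mul_I,
    sub_self, zero_div]

theorem fourierCoef_eq_setIntegral (f : ℂ → ℂ) (n : ℤ) :
    fourierCoef f n =
      (2 * π : ℂ)⁻¹ * ∫ θ in Set.Ioc 0 (2 * π), exp (θ * I) ^ (-n) * f (exp (θ * I)) := by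
  rw [fourierCoef, intervalIntegral.integral_of_le (by positivity), one_div]
  congr 2 with θ
  rw [mul_comm, ← exp_int_mul]
  push_cast
  ring_nf

theorem l2NormSqCircle_eq_setIntegral (f : ℂ → ℂ) :
    l2NormSqCircle f = (2 * π)⁻¹ * ∫ θ in Set.Ioc 0 (2 * π), ‖f (exp (θ * I))‖ ^ 2 := by
  rw [l2NormSqCircle, intervalIntegral.integral_of_le (by positivity), one_div]

theorem l2NormSqCircle_nonneg (f : ℂ → ℂ) : 0 ≤ l2NormSqCircle f := by
  rw [l2NormSqCircle_eq_setIntegral]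
  exact mul_nonneg (by positivity) (integral_nonneg fun θ => by positivity)

theorem MemL2Circle.integrableOn {f : ℂ → ℂ} (hf : MemL2Circle f) :
    IntegrableOn (fun θ : ℝ => f (exp (θ * I))) (Set.Ioc 0 (2 * π)) :=
  MemLp.integrable one_le_two hf

theorem memL2Circle_zpow (k : ℤ) : MemL2Circle fun t => t ^ k :=
  MemLp.of_bound (continuous_exp_mul_I_zpow k).aestronglyMeasurable 1
    (ae_of_all _ fun θ => (norm_exp_mul_I_zpow θ k).le)

theorem MemL2Circle.zpow_mul {f : ℂ → ℂ} (hf : MemL2Circle f) (k : ℤ) :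
    MemL2Circle fun t => t ^ k * f t :=
  MemLp.of_le_mul (c := 1) hf
    ((continuous_exp_mul_I_zpow k).aestronglyMeasurable.mul hf.aestronglyMeasurable)
    (ae_of_all _ fun θ => by simp)

theorem MemL2Circle.sub {f g : ℂ → ℂ} (hf : MemL2Circle f) (hg : MemL2Circle g) :
    MemL2Circle fun t => f t - g t :=
  MemLp.sub hf hg

theorem MemL2Circle.const_mul {f : ℂ → ℂ} (hf : MemL2Circle f) (a : ℂ) :
    MemL2Circle fun t => a * f t :=
  MemLp.const_mul hf a

theorem MemL2Circle.sum {ι : Type*} (s : Finset ι) {f : ι → ℂ → ℂ}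
    (hf : ∀ i ∈ s, MemL2Circle (f i)) : MemL2Circle fun t => ∑ i ∈ s, f i t :=
  memLp_finsetSum s hf

theorem memL2Circle_laurent {ι : Type*} (s : Finset ι) (e : ι → ℤ) (a : ι → ℂ) :
    MemL2Circle fun t => ∑ i ∈ s, a i * t ^ e i :=
  MemL2Circle.sum s fun i _ => (memL2Circle_zpow (e i)).const_mul (a i)

theorem fourierCoef_zpow_mul (f : ℂ → ℂ) (k n : ℤ) :
    fourierCoef (fun t => t ^ k * f t) n = fourierCoef f (n - k) := by
  simp_rw [fourierCoef_eq_setIntegral, ← mul_assoc, ← zpow_add₀ (exp_ne_zero _)]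
  rw [neg_sub, sub_eq_neg_add]

theorem fourierCoef_zpow (k n : ℤ) : fourierCoef (fun t => t ^ k) n = if n = k then 1 else 0 := by
  simp_rw [fourierCoef_eq_setIntegral, ← zpow_add₀ (exp_ne_zero _), setIntegral_exp_mul_I_zpow,
    neg_add_eq_zero]
  split_ifs
  · exact inv_mul_cancel₀ (mul_ne_zero two_ne_zero (ofReal_ne_zero.mpr Real.pi_ne_zero))
  · exact mul_zero _

theorem fourierCoef_const_mul (a : ℂ) (f : ℂ → ℂ) (n : ℤ) :
    fourierCoef (fun t => a * f t) n = a * fourierCoef f n := by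
  simp_rw [fourierCoef_eq_setIntegral, mul_left_comm _ a, integral_const_mul]
  ring

theorem fourierCoef_sub {f g : ℂ → ℂ} (hf : MemL2Circle f) (hg : MemL2Circle g) (n : ℤ) :
    fourierCoef (fun t => f t - g t) n = fourierCoef f n - fourierCoef g n := by
  simp_rw [fourierCoef_eq_setIntegral, mul_sub]
  rw [integral_sub (hf.zpow_mul _).integrableOn (hg.zpow_mul _).integrableOn, mul_sub]

theorem fourierCoef_sum {ι : Type*} (s : Finset ι) {f : ι → ℂ → ℂ}
    (hf : ∀ i ∈ s, MemL2Circle (f i)) (n : ℤ) :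
    fourierCoef (fun t => ∑ i ∈ s, f i t) n = ∑ i ∈ s, fourierCoef (f i) n := by
  simp_rw [fourierCoef_eq_setIntegral, Finset.mul_sum]
  rw [integral_finsetSum s fun i hi => ((hf i hi).zpow_mul _).integrableOn, Finset.mul_sum]

theorem fourierCoef_laurent {ι : Type*} {s : Finset ι} {e : ι → ℤ} (he : Set.InjOn e s)
    (a : ι → ℂ) {j : ι} (hj : j ∈ s) :
    fourierCoef (fun t => ∑ i ∈ s, a i * t ^ e i) (e j) = a j := by
  rw [fourierCoef_sum s fun i _ => (memL2Circle_zpow (e i)).const_mul (a i)]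
  simp_rw [fourierCoef_const_mul, fourierCoef_zpow]
  refine (Finset.sum_eq_single_of_mem j hj fun i hi hij => ?_).trans (by simp)
  rw [if_neg fun h => hij (he hi hj h.symm), mul_zero]

theorem fourierCoef_laurent_of_forall_ne {ι : Type*} {s : Finset ι} {e : ι → ℤ} (a : ι → ℂ)
    {n : ℤ} (hn : ∀ i ∈ s, e i ≠ n) : fourierCoef (fun t => ∑ i ∈ s, a i * t ^ e i) n = 0 := by
  rw [fourierCoef_sum s fun i _ => (memL2Circle_zpow (e i)).const_mul (a i)]
  simp_rw [fourierCoef_const_mul, fourierCoef_zpow]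
  exact Finset.sum_eq_zero fun i hi => by rw [if_neg (hn i hi).symm, mul_zero]

theorem MemH2.sub {f g : ℂ → ℂ} (hf : MemH2 f) (hg : MemH2 g) : MemH2 fun t => f t - g t :=
  ⟨hf.1.sub hg.1, fun n hn => by rw [fourierCoef_sub hf.1 hg.1, hf.2 n hn, hg.2 n hn, sub_zero]⟩

theorem MemH2.const_mul {f : ℂ → ℂ} (hf : MemH2 f) (a : ℂ) : MemH2 fun t => a * f t :=
  ⟨hf.1.const_mul a, fun n hn => by rw [fourierCoef_const_mul, hf.2 n hn, mul_zero]⟩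

theorem MemH2.pow_mul {f : ℂ → ℂ} (hf : MemH2 f) (k : ℕ) : MemH2 fun t => t ^ k * f t := by
  simp_rw [← zpow_natCast]
  exact ⟨hf.1.zpow_mul k, fun n hn => by rw [fourierCoef_zpow_mul, hf.2 _ (by omega)]⟩

theorem MemH2.sum {ι : Type*} (s : Finset ι) {f : ι → ℂ → ℂ} (hf : ∀ i ∈ s, MemH2 (f i)) :
    MemH2 fun t => ∑ i ∈ s, f i t :=
  ⟨MemL2Circle.sum s fun i hi => (hf i hi).1, fun n hn => by
    rw [fourierCoef_sum s fun i hi => (hf i hi).1]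
    exact Finset.sum_eq_zero fun i hi => (hf i hi).2 n hn⟩

theorem MemH2.mul_eval {f : ℂ → ℂ} (hf : MemH2 f) (P : Polynomial ℂ) :
    MemH2 fun t => f t * P.eval t := by
  have hsum : (fun t => f t * P.eval t) =
      fun t => ∑ k ∈ Finset.range (P.natDegree + 1), P.coeff k * (t ^ k * f t) := by
    ext t
    rw [Polynomial.eval_eq_sum_range, Finset.mul_sum]
    exact Finset.sum_congr rfl fun k _ => by ring
  rw [hsum]
  exact MemH2.sum _ fun k _ => (hf.pow_mul k).const_mul _

theorem memH2_zpow_neg_mul {f : ℂ → ℂ} (hf : MemL2Circle f) {L : ℤ}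
    (hfL : ∀ n < L, fourierCoef f n = 0) : MemH2 fun t => t ^ (-L) * f t :=
  ⟨hf.zpow_mul (-L), fun n hn => by rw [fourierCoef_zpow_mul, hfL _ (by omega)]⟩

theorem memH2_laurent {ι : Type*} {s : Finset ι} {e : ι → ℤ} (he : ∀ i ∈ s, 0 ≤ e i)
    (a : ι → ℂ) : MemH2 fun t => ∑ i ∈ s, a i * t ^ e i :=
  ⟨memL2Circle_laurent s e a, fun _ hn =>
    fourierCoef_laurent_of_forall_ne a fun i hi => by linarith [he i hi]⟩

theorem MemH2.fourierCoef_sub_partialSum {f : ℂ → ℂ} (hf : MemH2 f) {L : ℕ} {n : ℤ}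
    (hn : n < L) :
    fourierCoef (fun t => f t - ∑ k ∈ Finset.range L, fourierCoef f k * t ^ (k : ℤ)) n = 0 := by
  rcases lt_or_ge n 0 with hneg | hnonneg
  · exact (hf.sub (memH2_laurent (fun k _ => Nat.cast_nonneg k) _)).2 n hneg
  lift n to ℕ using hnonneg
  rw [fourierCoef_sub hf.1 (memL2Circle_laurent _ _ _),
    fourierCoef_laurent Nat.cast_injective.injOn _ (Finset.mem_range.mpr (by omega)), sub_self]

theorem setIntegral_zpow_mul_conj (G : ℂ → ℂ) (k : ℤ) :
    ∫ θ in Set.Ioc 0 (2 * π), exp (θ * I) ^ k * conj (G (exp (θ * I))) =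
      2 * π * conj (fourierCoef G k) := by
  have h2π : (2 * π : ℂ) ≠ 0 := mul_ne_zero two_ne_zero (ofReal_ne_zero.mpr Real.pi_ne_zero)
  rw [fourierCoef_eq_setIntegral, map_mul, map_inv₀,
    show conj (2 * π : ℂ) = 2 * π by simp [map_ofNat], ← mul_assoc, mul_inv_cancel₀ h2π, one_mul, ← integral_conj]
  simp_rw [map_mul, conj_exp_mul_I_zpow, neg_neg]

theorem setIntegral_laurent_mul_conj {ι : Type*} (s : Finset ι) (e : ι → ℤ) (a : ι → ℂ)
    {G : ℂ → ℂ} (hG : MemL2Circle G) :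
    ∫ θ in Set.Ioc 0 (2 * π), (∑ i ∈ s, a i * exp (θ * I) ^ e i) * conj (G (exp (θ * I))) =
      2 * π * ∑ i ∈ s, a i * conj (fourierCoef G (e i)) := by
  have hint : ∀ k : ℤ, IntegrableOn (fun θ : ℝ => exp (θ * I) ^ k * conj (G (exp (θ * I))))
      (Set.Ioc 0 (2 * π)) := fun k =>
    (MemLp.star hG).integrable_mul (memL2Circle_zpow k) |>.congr (ae_of_all _ fun θ => mul_comm _ _)
  calc _ = ∑ i ∈ s, a i * ∫ θ in Set.Ioc 0 (2 * π), exp (θ * I) ^ e i * conj (G (exp (θ * I))) := by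
        simp_rw [Finset.sum_mul, mul_assoc]
        rw [integral_finsetSum s fun i _ => (hint (e i)).const_mul (a i)]
        simp_rw [integral_const_mul]
    _ = _ := by
        simp_rw [setIntegral_zpow_mul_conj, Finset.mul_sum]
        exact Finset.sum_congr rfl fun i _ => by ring

theorem l2NormSqCircle_laurent_add {ι : Type*} {s : Finset ι} {e : ι → ℤ} (he : Set.InjOn e s)
    (hneg : ∀ i ∈ s, e i < 0) (a : ι → ℂ) {B : ℂ → ℂ} (hB : MemH2 B) :
    l2NormSqCircle (fun t => ∑ i ∈ s, a i * t ^ e i + B t) =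
      ∑ i ∈ s, ‖a i‖ ^ 2 + l2NormSqCircle B := by
  have hA := memL2Circle_laurent s e a
  have hcross : ∫ θ in Set.Ioc 0 (2 * π),
      (∑ i ∈ s, a i * exp (θ * I) ^ e i) * conj (B (exp (θ * I))) = 0 := by
    rw [setIntegral_laurent_mul_conj s e a hB.1,
      Finset.sum_eq_zero fun i hi => by rw [hB.2 _ (hneg i hi), map_zero, mul_zero], mul_zero]
  have hnormA : ∫ θ in Set.Ioc 0 (2 * π), ‖∑ i ∈ s, a i * exp (θ * I) ^ e i‖ ^ 2 =
      2 * π * ∑ i ∈ s, ‖a i‖ ^ 2 := by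
    apply ofReal_injective
    rw [← integral_mul_conj_self, setIntegral_laurent_mul_conj s e a hA]
    push_cast
    exact congrArg _ <| Finset.sum_congr rfl fun i hi => by
      rw [fourierCoef_laurent he a hi, mul_conj']
  simp_rw [l2NormSqCircle_eq_setIntegral]
  rw [integral_norm_add_sq hA hB.1, hcross, hnormA, zero_re, mul_zero, add_zero, mul_add,
    ← mul_assoc, inv_mul_cancel₀ (by positivity), one_mul]

theorem sInf_eq_of_sInf_sqrt_eq_zero {ι : Type*} [Nonempty ι] {f d : ι → ℝ} {C : ℝ}
    (hfd : ∀ i, f i = C + d i) (hd : ∀ i, 0 ≤ d i) (h0 : sInf {r | ∃ i, r = √(d i)} = 0) :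
    sInf {r | ∃ i, r = f i} = C := by
  have hlow : C ∈ lowerBounds {r | ∃ i, r = f i} := by
    rintro _ ⟨i, rfl⟩
    linarith [hfd i, hd i]
  obtain ⟨i₀⟩ := ‹Nonempty ι›
  refine le_antisymm (le_of_forall_pos_lt_add fun ε hε => ?_) (le_csInf ⟨_, i₀, rfl⟩ hlow)
  have hsqrt : sInf {r | ∃ i, r = √(d i)} < √ε := by rw [h0]; exact Real.sqrt_pos.mpr hε
  obtain ⟨_, ⟨i, rfl⟩, hi⟩ := exists_lt_of_csInf_lt (s := {r | ∃ i, r = √(d i)}) ⟨_, i₀, rfl⟩ hsqrt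
  have hdi : d i < ε := (Real.sqrt_lt_sqrt_iff (hd i)).mp hi
  linarith [csInf_le ⟨C, hlow⟩ ⟨i, rfl⟩, hfd i]

theorem inf_polynomial_approx_eq_sum_fourier_coeff_sq_general
    (h : ℂ → ℂ) (hh : MemH2 h)
    (hdense : ∀ g : ℂ → ℂ, MemH2 g →
      sInf {r : ℝ | ∃ P : Polynomial ℂ,
        r = Real.sqrt (l2NormSqCircle (fun t => g t - h t * P.eval t))} = 0)
    (L : ℕ) :
    sInf {r : ℝ | ∃ P : Polynomial ℂ,
        r = l2NormSqCircle (fun t => (t ^ (-(L : ℤ)) - P.eval t) * h t)} =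
      ∑ n ∈ Finset.range L, ‖fourierCoef h n‖ ^ 2 := by
  set g : ℂ → ℂ := fun t =>
    t ^ (-(L : ℤ)) * (h t - ∑ n ∈ Finset.range L, fourierCoef h n * t ^ (n : ℤ))
  have hg : MemH2 g := memH2_zpow_neg_mul (hh.1.sub (memL2Circle_laurent _ _ _))
    fun _ => hh.fourierCoef_sub_partialSum
  have hsplit : ∀ (P : Polynomial ℂ) (t : ℂ), (t ^ (-(L : ℤ)) - P.eval t) * h t =
      ∑ n ∈ Finset.range L, fourierCoef h n * t ^ ((n : ℤ) - L) + (g t - h t * P.eval t) := by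
    intro P t
    have hshift : ∀ n ∈ Finset.range L, t ^ (-(L : ℤ)) * (fourierCoef h n * t ^ (n : ℤ)) =
        fourierCoef h n * t ^ ((n : ℤ) - L) := fun n hn => by
      -- no `t ≠ 0` is needed because the exponent `n - L` is nonzero
      rw [mul_left_comm, ← zpow_add' (Or.inr (Or.inl (by simp at hn; omega))), neg_add_eq_sub]
    simp only [g, mul_sub, Finset.mul_sum, Finset.sum_congr rfl hshift]
    ring
  refine sInf_eq_of_sInf_sqrt_eq_zero (fun P => ?_) (fun _ => l2NormSqCircle_nonneg _) (hdense g hg)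
  simp_rw [hsplit P]
  exact l2NormSqCircle_laurent_add (fun m _ n _ hmn => by simpa using hmn)
    (fun n hn => by simp at hn; omega) _ (hg.sub (hh.mul_eval P))

/-- If `h ∈ H²` and `{hP : P polynomial}` is dense in `H²`, then for
every `L ≥ 1`, `inf_P ‖(t^{−L} − P(t)) h(t)‖²_{L²(𝕋)} = ∑_{n=0}^{L−1} |c_n{h}|²`. -/
theorem inf_polynomial_approx_eq_sum_fourier_coeff_sq
    (h : ℂ → ℂ) (hh : MemH2 h)
    (hdense : ∀ g : ℂ → ℂ, MemH2 g →
      sInf {r : ℝ | ∃ P : Polynomial ℂ,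
        r = Real.sqrt (l2NormSqCircle (fun t => g t - h t * P.eval t))} = 0)
    (L : ℕ) (hL : 1 ≤ L) :
    sInf {r : ℝ | ∃ P : Polynomial ℂ,
        r = l2NormSqCircle (fun t => (t ^ (-(L : ℤ)) - P.eval t) * h t)} =
      ∑ n ∈ Finset.range L, ‖fourierCoef h n‖ ^ 2 :=
  inf_polynomial_approx_eq_sum_fourier_coeff_sq_general h hh hdense L
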